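/- With χ as above, K, l₀, F_load > 0: suppose x₁ ≤ ... ≤ x_m (m ≥ 1) has spread x_m - x₁ ≤ q where q ≥ F_load/K + 2l₀, c is the cargo equilibrium position, and a new point x' with |x' - c| ≤ l₀ is inserted into the sequence. Then the spread of the new (m+1)-point sequence is still at most q. -/
import Mathlib


/-- Elastic force with dead zone. -/
noncomputable def chi (K l₀ : ℝ) (l : ℝ) : ℝ :=
  if l > l₀ then K * (l - l₀) else if l < -l₀ then K * (l + l₀) else 0

lemma chi_nonneg (K l₀ l : ℝ) (hK : 0 < K) (hl : 0 < l₀) (h : -l₀ ≤ l) :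
    0 ≤ chi K l₀ l := by
  unfold chi
  split_ifs with h1 h2
  · nlinarith
  · linarith
  · exact le_refl 0

lemma chi_nonpos (K l₀ l : ℝ) (hK : 0 < K) (hl : 0 < l₀) (h : l ≤ l₀) :
    chi K l₀ l ≤ 0 := by
  unfold chi
  split_ifs with h1 h2
  · linarith
  · nlinarith
  · exact le_refl 0

/-- Attaching a new motor within distance `l₀` of the cargo does not increase the
spread beyond `q`, provided `q ≥ F_load/K + 2l₀`. -/
theorem attachment_preserves_spread (K l₀ F q : ℝ) (hK : 0 < K) (hl : 0 < l₀)
    (hF : 0 < F) (hq : F / K + 2 * l₀ ≤ q)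
    (m : ℕ) (hm : 1 ≤ m) (x : Fin m → ℝ) (hx : Monotone x)
    (c : ℝ) (heq : F = ∑ i, chi K l₀ (x i - c))
    (hspread : x ⟨m - 1, by omega⟩ - x ⟨0, by omega⟩ ≤ q)
    (x' : ℝ) (hx' : |x' - c| ≤ l₀) :
    max (x ⟨m - 1, by omega⟩) x' - min (x ⟨0, by omega⟩) x' ≤ q := by
  obtain ⟨hx'l, hx'r⟩ := abs_le.mp hx'
  set i0 : Fin m := ⟨0, by omega⟩
  set im : Fin m := ⟨m - 1, by omega⟩
  have hlo : ∀ i, x i0 ≤ x i := fun i => hx (by simp [Fin.le_def, i0])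
  have hhi : ∀ i, x i ≤ x im := fun i => hx (by simp [Fin.le_def, im]; omega)
  have hab : x i0 ≤ x im := hlo im
  have hKF : F / K * K = F := div_mul_cancel₀ F (ne_of_gt hK)
  rcases le_or_gt x' (x im) with h1 | h1
  · rcases le_or_gt (x i0) x' with h2 | h2
    · rw [max_eq_left h1, min_eq_left h2]; exact hspread
    · -- x' < x i0 : need x im - x' ≤ q
      rw [max_eq_left h1, min_eq_right h2.le]
      by_contra hcon
      push_neg at hcon
      have hbc : x im - c > q - l₀ := by linarith
      have hchi_b : chi K l₀ (x im - c) = K * (x im - c - l₀) := by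
        unfold chi
        rw [if_pos]
        nlinarith
      have hbig : F < chi K l₀ (x im - c) := by
        rw [hchi_b]; nlinarith
      have hnn : ∀ i ∈ Finset.univ, 0 ≤ chi K l₀ (x i - c) := by
        intro i _
        apply chi_nonneg K l₀ _ hK hl
        have := hlo i
        have := hhi i0
        nlinarith [hspread]
      have := Finset.single_le_sum hnn (Finset.mem_univ im)
      linarith [heq ▸ this]
  · -- x im < x' : need x' - x i0 ≤ q
    rw [max_eq_right h1.le, min_eq_left (le_trans hab h1.le)]
    by_contra hcon
    push_neg at hcon
    have hca : c - x i0 > q - l₀ := by linarith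
    have hchi_a : chi K l₀ (x i0 - c) = K * (x i0 - c + l₀) := by
      unfold chi
      rw [if_neg, if_pos]
      · nlinarith
      · push_neg; nlinarith
    have hsmall : chi K l₀ (x i0 - c) < -F := by
      rw [hchi_a]; nlinarith
    have hnp : ∀ i ∈ Finset.univ, chi K l₀ (x i - c) ≤ 0 := by
      intro i _
      apply chi_nonpos K l₀ _ hK hl
      have := hhi i
      nlinarith [hspread]
    have hsum : ∑ i, chi K l₀ (x i - c) ≤ chi K l₀ (x i0 - c) := by
      rw [← Finset.add_sum_erase _ _ (Finset.mem_univ i0)]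
      have : ∑ i ∈ Finset.univ.erase i0, chi K l₀ (x i - c) ≤ 0 :=
        Finset.sum_nonpos fun i hi => hnp i (Finset.mem_univ i)
      linarith
    linarith [heq ▸ hsum]
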